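/- arXiv:2204.04872 — 8 statements merged into one kernel-verified Lean document; each statement's English description precedes it below -/
import Mathlib

section
/- Let T:V→𝔤 be a relative Rota-Baxter operator on a Lie-Yamaguti algebra 𝔤 with respect to a representation (V;ρ,μ). Then the brackets [u,v]_T := ρ(Tu)v − ρ(Tv)u and ⟦u,v,w⟧_T := D(Tu,Tv)w + μ(Tv,Tw)u − μ(Tu,Tw)v define a Lie-Yamaguti algebra structure on V, and T is a homomorphism of Lie-Yamaguti algebras from (V,[·,·]_T,⟦·,·,·⟧_T) to (𝔤,[·,·],⟦·,·,·⟧). -/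
/-!
Every axiom of the induced structure on `V` is checked by expanding both brackets and
replacing `T [u,v]_T` and `T ⟦u,v,w⟧_T` by `[Tu,Tv]` and `⟦Tu,Tv,Tw⟧` (the Rota-Baxter
identities, which are also the homomorphism property); what remains is a representation axiom
at `Tu, Tv, …`. The two exceptions are the cyclic identity for `⟦[x,y]_T, z, w⟧_T`, which is
`ρ` applied to the Jacobi-type identity of `g`, and the fundamental identity, which needs that
`[D(x,y), D(z,w)] = D(⟦x,y,z⟧, w) + D(z, ⟦x,y,w⟧)`; the latter follows from the representation
axioms together with `⟦x,y,·⟧` being a derivation of `[·,·]`.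
-/

open scoped BigOperators

variable (K : Type*) [Field K]

section Defs
variable {g V : Type*} [AddCommGroup g] [Module K g] [AddCommGroup V] [Module K V]

/-- Bilinearity of a two-argument map. -/
def IsBilin (f : g → g → V) : Prop :=
  (∀ a b c, f (a + b) c = f a c + f b c) ∧
  (∀ (s : K) a c, f (s • a) c = s • f a c) ∧
  (∀ a b c, f a (b + c) = f a b + f a c) ∧
  (∀ (s : K) a b, f a (s • b) = s • f a b)

/-- Trilinearity of a three-argument map. -/
def IsTrilin (f : g → g → g → V) : Prop :=
  (∀ a b c d, f (a + b) c d = f a c d + f b c d) ∧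
  (∀ (s : K) a c d, f (s • a) c d = s • f a c d) ∧
  (∀ a b c d, f a (b + c) d = f a b d + f a c d) ∧
  (∀ (s : K) a b d, f a (s • b) d = s • f a b d) ∧
  (∀ a b c d, f a b (c + d) = f a b c + f a b d) ∧
  (∀ (s : K) a b c, f a b (s • c) = s • f a b c)

/-- Linearity of a map. -/
def IsLin (f : g → V) : Prop :=
  (∀ a b, f (a + b) = f a + f b) ∧ (∀ (s : K) a, f (s • a) = s • f a)

/-- `(g, br, tr)` is a Lie-Yamaguti algebra. -/
def IsLY (br : g → g → g) (tr : g → g → g → g) : Prop :=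
  IsBilin K br ∧ IsTrilin K tr ∧
  (∀ x y, br x y = - br y x) ∧
  (∀ x y z, tr x y z = - tr y x z) ∧
  (∀ x y z, br (br x y) z + br (br y z) x + br (br z x) y
      + tr x y z + tr y z x + tr z x y = 0) ∧
  (∀ x y z w, tr (br x y) z w + tr (br y z) x w + tr (br z x) y w = 0) ∧
  (∀ x y z w, tr x y (br z w) = br (tr x y z) w + br z (tr x y w)) ∧
  (∀ x y z w t, tr x y (tr z w t) =
      tr (tr x y z) w t + tr z (tr x y w) t + tr z w (tr x y t))

/-- The operator `D(x,y) = μ(y,x) − μ(x,y) + [ρ(x),ρ(y)] − ρ([x,y])`. -/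
def Dmap (br : g → g → g) (ρ : g → Module.End K V) (μ : g → g → Module.End K V)
    (x y : g) : Module.End K V :=
  μ y x - μ x y + (ρ x * ρ y - ρ y * ρ x) - ρ (br x y)

/-- `(V; ρ, μ)` is a representation of the Lie-Yamaguti algebra `(g, br, tr)`. -/
def IsRep (br : g → g → g) (tr : g → g → g → g)
    (ρ : g → Module.End K V) (μ : g → g → Module.End K V) : Prop :=
  IsLin K ρ ∧ IsBilin K μ ∧
  (∀ x y z, μ (br x y) z - μ x z * ρ y + μ y z * ρ x = 0) ∧
  (∀ x y z, μ x (br y z) - ρ y * μ x z + ρ z * μ x y = 0) ∧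
  (∀ x y z, ρ (tr x y z) = Dmap K br ρ μ x y * ρ z - ρ z * Dmap K br ρ μ x y) ∧
  (∀ x y z w, μ z w * μ x y - μ y w * μ x z - μ x (tr y z w)
      + Dmap K br ρ μ y z * μ x w = 0) ∧
  (∀ x y z w, μ (tr x y z) w + μ z (tr x y w) =
      Dmap K br ρ μ x y * μ z w - μ z w * Dmap K br ρ μ x y)

/-- `T : V → g` is a relative Rota-Baxter operator. -/
def IsRRB (br : g → g → g) (tr : g → g → g → g)
    (ρ : g → Module.End K V) (μ : g → g → Module.End K V) (T : V →ₗ[K] g) : Prop :=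
  (∀ u v, br (T u) (T v) = T (ρ (T u) v - ρ (T v) u)) ∧
  (∀ u v w, tr (T u) (T v) (T w) =
      T (Dmap K br ρ μ (T u) (T v) w + μ (T v) (T w) u - μ (T u) (T w) v))

end Defs

section Nij
variable {h : Type*} [AddCommGroup h]

/-- `N` is a Nijenhuis operator on the Lie-Yamaguti algebra `(h, br, tr)`. -/
def IsNijenhuis (br : h → h → h) (tr : h → h → h → h) (N : h → h) : Prop :=
  (∀ x y, br (N x) (N y) = N (br (N x) y + br x (N y) - N (br x y))) ∧
  (∀ x y z, tr (N x) (N y) (N z) =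
      N (tr (N x) (N y) z + tr (N x) y (N z) + tr x (N y) (N z)
        - N (tr (N x) y z) - N (tr x (N y) z) - N (tr x y (N z))
        + N (N (tr x y z))))

end Nij

namespace IsLin

variable {K} {g V : Type*} [AddCommGroup g] [Module K g] [AddCommGroup V] [Module K V]
  {f : g → V}

theorem map_zero (hf : IsLin K f) : f 0 = 0 := by
  rw [← zero_smul K (0 : g), hf.2, zero_smul]

theorem map_neg (hf : IsLin K f) (a : g) : f (-a) = -f a := by
  rw [← neg_one_smul K a, hf.2, neg_one_smul]

end IsLin

section RelativeRotaBaxter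

variable {K} {g V : Type*} [AddCommGroup g] [Module K g] [AddCommGroup V] [Module K V]
  {br : g → g → g} {tr : g → g → g → g} {ρ : g → Module.End K V} {μ : g → g → Module.End K V}

namespace IsRep

variable (hrep : IsRep K br tr ρ μ)
include hrep

theorem mu_bracket_left (x y z : g) : μ (br x y) z = μ x z * ρ y - μ y z * ρ x := by
  linear_combination (norm := abel) hrep.2.2.1 x y z

theorem mu_bracket_right (x y z : g) : μ x (br y z) = ρ y * μ x z - ρ z * μ x y := by
  linear_combination (norm := abel) hrep.2.2.2.1 x y z

theorem mu_triple_right (x y z w : g) :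
    μ x (tr y z w) = μ z w * μ x y - μ y w * μ x z + Dmap K br ρ μ y z * μ x w := by
  linear_combination (norm := abel) -hrep.2.2.2.2.2.1 x y z w

theorem rho_triple (x y z : g) :
    ρ (tr x y z) = Dmap K br ρ μ x y * ρ z - ρ z * Dmap K br ρ μ x y :=
  hrep.2.2.2.2.1 x y z

theorem mu_triple_add_mu_triple (x y z w : g) :
    μ (tr x y z) w + μ z (tr x y w) = Dmap K br ρ μ x y * μ z w - μ z w * Dmap K br ρ μ x y :=
  hrep.2.2.2.2.2.2 x y z w

end IsRep

theorem Dmap_swap (hbr : ∀ x y, br x y = -br y x) (hρ : IsLin K ρ) (x y : g) :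
    Dmap K br ρ μ x y = -Dmap K br ρ μ y x := by
  rw [Dmap, Dmap, hbr x y, hρ.map_neg]
  abel

theorem Dmap_commutator (hLY : IsLY K br tr) (hrep : IsRep K br tr ρ μ) (x y z w : g) :
    Dmap K br ρ μ x y * Dmap K br ρ μ z w - Dmap K br ρ μ z w * Dmap K br ρ μ x y
      = Dmap K br ρ μ (tr x y z) w + Dmap K br ρ μ z (tr x y w) := by
  obtain ⟨⟨hρ_add, -⟩, -, -, -, hρ_tr, -, hμ_tr⟩ := hrep
  obtain ⟨-, -, -, -, -, -, htr_br, -⟩ := hLY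
  have hρ_tr_br : ρ (br (tr x y z) w) + ρ (br z (tr x y w))
      = Dmap K br ρ μ x y * ρ (br z w) - ρ (br z w) * Dmap K br ρ μ x y := by
    rw [← hρ_add, ← htr_br]
    exact hρ_tr x y (br z w)
  -- only `D(x,y)` stays folded, matching its occurrences in `hρ_tr` and `hμ_tr`
  set D := Dmap K br ρ μ x y
  rw [Dmap, Dmap, Dmap]
  linear_combination (norm := noncomm_ring) hμ_tr x y z w - hμ_tr x y w z
    - hρ_tr x y z * ρ w + ρ w * hρ_tr x y z - ρ z * hρ_tr x y w + hρ_tr x y w * ρ z + hρ_tr_br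

variable (br ρ μ) (T : V →ₗ[K] g)

def rrbBracket (u v : V) : V := ρ (T u) v - ρ (T v) u

def rrbTriple (u v w : V) : V :=
  Dmap K br ρ μ (T u) (T v) w + μ (T v) (T w) u - μ (T u) (T w) v

variable {br ρ μ T}

theorem isBilin_rrbBracket (hρ : IsLin K ρ) : IsBilin K (rrbBracket ρ T) := by
  refine ⟨fun u v w => ?_, fun s u v => ?_, fun u v w => ?_, fun s u v => ?_⟩ <;>
    simp only [rrbBracket, map_add, map_smul, hρ.1, hρ.2, LinearMap.add_apply,
      LinearMap.smul_apply] <;> module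

theorem isTrilin_rrbTriple (hbr : IsBilin K br) (hρ : IsLin K ρ) (hμ : IsBilin K μ) :
    IsTrilin K (rrbTriple br ρ μ T) := by
  obtain ⟨hbr_add₁, hbr_smul₁, hbr_add₂, hbr_smul₂⟩ := hbr
  obtain ⟨hμ_add₁, hμ_smul₁, hμ_add₂, hμ_smul₂⟩ := hμ
  refine ⟨fun u v w t => ?_, fun s u v t => ?_, fun u v w t => ?_, fun s u v t => ?_,
    fun u v w t => ?_, fun s u v w => ?_⟩ <;>
    simp only [rrbTriple, Dmap, map_add, map_smul, hρ.1, hρ.2, hμ_add₁, hμ_smul₁, hμ_add₂,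
      hμ_smul₂, hbr_add₁, hbr_smul₁, hbr_add₂, hbr_smul₂, LinearMap.add_apply,
      LinearMap.smul_apply, LinearMap.sub_apply, Module.End.mul_apply, smul_sub,
      smul_add] <;> module

theorem rrbBracket_swap (u v : V) : rrbBracket ρ T u v = -rrbBracket ρ T v u := by
  simp only [rrbBracket]
  abel

theorem rrbTriple_swap (hbr : ∀ x y, br x y = -br y x) (hρ : IsLin K ρ) (u v w : V) :
    rrbTriple br ρ μ T u v w = -rrbTriple br ρ μ T v u w := by
  simp only [rrbTriple, Dmap_swap hbr hρ (T u) (T v), LinearMap.neg_apply]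
  abel

variable (hT : IsRRB K br tr ρ μ T)
include hT

theorem map_rrbBracket (u v : V) : T (rrbBracket ρ T u v) = br (T u) (T v) :=
  (hT.1 u v).symm

theorem map_rrbTriple (u v w : V) : T (rrbTriple br ρ μ T u v w) = tr (T u) (T v) (T w) :=
  (hT.2 u v w).symm

theorem rrbBracket_jacobi (x y z : V) :
    rrbBracket ρ T (rrbBracket ρ T x y) z + rrbBracket ρ T (rrbBracket ρ T y z) x
      + rrbBracket ρ T (rrbBracket ρ T z x) y + rrbTriple br ρ μ T x y z
      + rrbTriple br ρ μ T y z x + rrbTriple br ρ μ T z x y = 0 := by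
  simp only [rrbBracket, rrbTriple, ← hT.1, Dmap, map_sub, LinearMap.sub_apply,
    LinearMap.add_apply, Module.End.mul_apply]
  abel

/-- Obtained by letting `ρ` act on `w` in the Jacobi-type identity of `g` at `Tx, Ty, Tz`. -/
theorem rrbTriple_cyclic_bracket (hLY : IsLY K br tr) (hrep : IsRep K br tr ρ μ) (x y z w : V) :
    rrbTriple br ρ μ T (rrbBracket ρ T x y) z w + rrbTriple br ρ μ T (rrbBracket ρ T y z) x w
      + rrbTriple br ρ μ T (rrbBracket ρ T z x) y w = 0 := by
  obtain ⟨-, -, -, -, hbr_jacobi, -⟩ := hLY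
  have hJacobi := congrArg (fun q => ρ q w) (hbr_jacobi (T x) (T y) (T z))
  simp only [hrep.1.1, hrep.1.map_zero, hrep.rho_triple, Dmap, LinearMap.add_apply,
    LinearMap.zero_apply, LinearMap.sub_apply, Module.End.mul_apply, map_add, map_sub] at hJacobi
  simp only [rrbBracket, rrbTriple, ← hT.1]
  simp only [Dmap, hrep.mu_bracket_left, hrep.mu_bracket_right, map_sub, LinearMap.sub_apply,
    LinearMap.add_apply, Module.End.mul_apply]
  linear_combination (norm := abel) -hJacobi

theorem rrbTriple_bracket (hrep : IsRep K br tr ρ μ) (x y z w : V) :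
    rrbTriple br ρ μ T x y (rrbBracket ρ T z w)
      = rrbBracket ρ T (rrbTriple br ρ μ T x y z) w
        + rrbBracket ρ T z (rrbTriple br ρ μ T x y w) := by
  simp only [rrbBracket, rrbTriple, ← hT.1, ← hT.2]
  simp only [hrep.mu_bracket_right, hrep.rho_triple, Dmap, map_sub, map_add, LinearMap.sub_apply,
    LinearMap.add_apply, Module.End.mul_apply]
  abel

theorem rrbTriple_triple (hLY : IsLY K br tr) (hrep : IsRep K br tr ρ μ) (x y z w t : V) :
    rrbTriple br ρ μ T x y (rrbTriple br ρ μ T z w t)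
      = rrbTriple br ρ μ T (rrbTriple br ρ μ T x y z) w t
        + rrbTriple br ρ μ T z (rrbTriple br ρ μ T x y w) t
        + rrbTriple br ρ μ T z w (rrbTriple br ρ μ T x y t) := by
  have hμy := DFunLike.congr_fun (hrep.mu_triple_right (T x) (T z) (T w) (T t)) y
  have hμx := DFunLike.congr_fun (hrep.mu_triple_right (T y) (T z) (T w) (T t)) x
  have hμz := DFunLike.congr_fun
    (hrep.mu_triple_add_mu_triple (T x) (T y) (T w) (T t)) z
  have hμw := DFunLike.congr_fun
    (hrep.mu_triple_add_mu_triple (T x) (T y) (T z) (T t)) w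
  have hD := DFunLike.congr_fun (Dmap_commutator hLY hrep (T x) (T y) (T z) (T w)) t
  simp only [LinearMap.add_apply, LinearMap.sub_apply, Module.End.mul_apply]
    at hμy hμx hμz hμw hD
  simp only [rrbTriple, ← hT.2, map_add, map_sub]
  linear_combination (norm := abel) hD + hμx - hμy - hμz + hμw

theorem isLY_rrb (hLY : IsLY K br tr) (hrep : IsRep K br tr ρ μ) :
    IsLY K (rrbBracket ρ T) (rrbTriple br ρ μ T) :=
  ⟨isBilin_rrbBracket hrep.1, isTrilin_rrbTriple hLY.1 hrep.1 hrep.2.1, rrbBracket_swap,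
    rrbTriple_swap hLY.2.2.1 hrep.1, rrbBracket_jacobi hT, rrbTriple_cyclic_bracket hT hLY hrep,
    rrbTriple_bracket hT hrep, rrbTriple_triple hT hLY hrep⟩

end RelativeRotaBaxter

theorem stmt6 {g V : Type*} [AddCommGroup g] [Module K g] [AddCommGroup V] [Module K V]
    (br : g → g → g) (tr : g → g → g → g)
    (ρ : g → Module.End K V) (μ : g → g → Module.End K V)
    (hLY : IsLY K br tr) (hrep : IsRep K br tr ρ μ)
    (T : V →ₗ[K] g) (hT : IsRRB K br tr ρ μ T) :
    IsLY K (fun u v : V => ρ (T u) v - ρ (T v) u)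
      (fun u v w : V => Dmap K br ρ μ (T u) (T v) w + μ (T v) (T w) u - μ (T u) (T w) v) ∧
    (∀ u v : V, T (ρ (T u) v - ρ (T v) u) = br (T u) (T v)) ∧
    (∀ u v w : V,
      T (Dmap K br ρ μ (T u) (T v) w + μ (T v) (T w) u - μ (T u) (T w) v)
        = tr (T u) (T v) (T w)) :=
  ⟨isLY_rrb hT hLY hrep, map_rrbBracket hT, map_rrbTriple hT⟩
end

section
/- Let T:V→𝔤 be a relative Rota-Baxter operator on a Lie-Yamaguti algebra 𝔤 with respect to a representation (V;ρ,μ). Define ϱ(u)x := [Tu,x]+T(ρ(x)u) and ϖ(u,v)x := ⟦x,Tu,Tv⟧−T(D(x,Tu)v−μ(x,Tv)u). Then D_{ϱ,ϖ}(u,v)x = ⟦Tu,Tv,x⟧ − T(μ(Tv,x)u − μ(Tu,x)v) for all u,v∈V and x∈𝔤, where D_{ϱ,ϖ}(u,v):=ϖ(v,u)−ϖ(u,v)+[ϱ(u),ϱ(v)]−ϱ([u,v]_T). -/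
open scoped BigOperators

variable (K : Type*) [Field K]

theorem stmt7 {g V : Type*} [AddCommGroup g] [Module K g] [AddCommGroup V] [Module K V]
    (br : g → g → g) (tr : g → g → g → g)
    (ρ : g → Module.End K V) (μ : g → g → Module.End K V)
    (hLY : IsLY K br tr) (hrep : IsRep K br tr ρ μ)
    (T : V →ₗ[K] g) (hT : IsRRB K br tr ρ μ T)
    (ϱ : V → Module.End K g) (ϖ : V → V → Module.End K g)
    (hϱ : ∀ u x, ϱ u x = br (T u) x + T (ρ x u))
    (hϖ : ∀ u v x, ϖ u v x = tr x (T u) (T v) - T (Dmap K br ρ μ x (T u) v - μ x (T v) u)) :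
    ∀ (u v : V) (x : g),
      Dmap K (fun u v : V => ρ (T u) v - ρ (T v) u) ϱ ϖ u v x
        = tr (T u) (T v) x - T (μ (T v) x u - μ (T u) x v) := by
  obtain ⟨hT1, hT2⟩ := hT
  obtain ⟨hρlin, hμbil, _, _, _, _, _⟩ := hrep
  obtain ⟨hbr, htr, hba, hta, hLY1, _, _, _⟩ := hLY
  have hρadd : ∀ y z : g, ρ (y + z) = ρ y + ρ z := hρlin.1
  have hρneg : ∀ w : g, ρ (-w) = -ρ w := fun w => by
    have h := hρlin.2 (-1 : K) w; simpa using h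
  have hbrneg2 : ∀ y w : g, br y (-w) = - br y w := fun y w => by
    have h := hbr.2.2.2 (-1 : K) y w; simpa using h
  intro u v x
  have hJ : br (br (T u) (T v)) x
      = br (T u) (br (T v) x) - br (T v) (br (T u) x)
        - tr (T u) (T v) x - tr (T v) x (T u) - tr x (T u) (T v) := by
    have h := hLY1 (T u) (T v) x
    rw [hba (br (T v) x) (T u), hba (br x (T u)) (T v), hba x (T u), hbrneg2] at h
    rw [← sub_eq_zero, ← h]; abel
  simp only [Dmap, hϖ, hϱ, LinearMap.sub_apply, LinearMap.add_apply, Module.End.mul_apply]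
  rw [← hT1 u v]
  rw [hbr.2.2.1 (T u) (br (T v) x) (T (ρ x v)),
      hbr.2.2.1 (T v) (br (T u) x) (T (ρ x u)),
      hρadd (br (T v) x) (T (ρ x v)), hρadd (br (T u) x) (T (ρ x u)),
      hT1 u (ρ x v), hT1 v (ρ x u)]
  simp only [LinearMap.add_apply, map_add, map_sub]
  rw [hba x (T u), hba x (T v), hρneg, hρneg, hta x (T v) (T u)]
  simp only [LinearMap.neg_apply, map_neg]
  rw [hJ]
  abel
end

section
/- Let T:V→𝔤 be a relative Rota-Baxter operator on a Lie-Yamaguti algebra 𝔤 with respect to a representation (V;ρ,μ). Then (𝔤;ϱ,ϖ) with ϱ(u)x := [Tu,x]+T(ρ(x)u) and ϖ(u,v)x := ⟦x,Tu,Tv⟧−T(D(x,Tu)v−μ(x,Tv)u) is a representation of the sub-adjacent Lie-Yamaguti algebra (V,[·,·]_T,⟦·,·,·⟧_T). -/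
open scoped BigOperators

variable (K : Type*) [Field K]

set_option maxHeartbeats 4000000 in
theorem stmt8 {g V : Type*} [AddCommGroup g] [Module K g] [AddCommGroup V] [Module K V]
    (br : g → g → g) (tr : g → g → g → g)
    (ρ : g → Module.End K V) (μ : g → g → Module.End K V)
    (hLY : IsLY K br tr) (hrep : IsRep K br tr ρ μ)
    (T : V →ₗ[K] g) (hT : IsRRB K br tr ρ μ T)
    (ϱ : V → Module.End K g) (ϖ : V → V → Module.End K g)
    (hϱ : ∀ u x, ϱ u x = br (T u) x + T (ρ x u))
    (hϖ : ∀ u v x, ϖ u v x = tr x (T u) (T v) - T (Dmap K br ρ μ x (T u) v - μ x (T v) u)) :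
    IsRep K (fun u v : V => ρ (T u) v - ρ (T v) u)
      (fun u v w : V => Dmap K br ρ μ (T u) (T v) w + μ (T v) (T w) u - μ (T u) (T w) v)
      ϱ ϖ := by
  obtain ⟨hbr, htr, bsk, tsk, ly3, ly4, ly6, ly7⟩ := hLY
  obtain ⟨brl, brsl, brr, brsr⟩ := hbr
  obtain ⟨t1a, t1s, t2a, t2s, t3a, t3s⟩ := htr
  obtain ⟨hρl, hμb, ra1, ra2, ra3, ra4, ra5⟩ := hrep
  obtain ⟨ρa, ρs⟩ := hρl
  obtain ⟨μ1a, μ1s, μ2a, μ2s⟩ := hμb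
  obtain ⟨rrb1, rrb2⟩ := hT
  -- negation / subtraction helpers
  have brn1 : ∀ p q, br (-p) q = -br p q := fun p q => by
    have h := brsl (-1 : K) p q; rwa [neg_one_smul, neg_one_smul] at h
  have brn2 : ∀ p q, br p (-q) = -br p q := fun p q => by
    have h := brsr (-1 : K) p q; rwa [neg_one_smul, neg_one_smul] at h
  have trn1 : ∀ p q r, tr (-p) q r = -tr p q r := fun p q r => by
    have h := t1s (-1 : K) p q r; rwa [neg_one_smul, neg_one_smul] at h
  have trn2 : ∀ p q r, tr p (-q) r = -tr p q r := fun p q r => by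
    have h := t2s (-1 : K) p q r; rwa [neg_one_smul, neg_one_smul] at h
  have trn3 : ∀ p q r, tr p q (-r) = -tr p q r := fun p q r => by
    have h := t3s (-1 : K) p q r; rwa [neg_one_smul, neg_one_smul] at h
  have ρn : ∀ p, ρ (-p) = -ρ p := fun p => by
    have h := ρs (-1 : K) p; rwa [neg_one_smul, neg_one_smul] at h
  have μn1 : ∀ p q, μ (-p) q = -μ p q := fun p q => by
    have h := μ1s (-1 : K) p q; rwa [neg_one_smul, neg_one_smul] at h
  have μn2 : ∀ p q, μ p (-q) = -μ p q := fun p q => by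
    have h := μ2s (-1 : K) p q; rwa [neg_one_smul, neg_one_smul] at h
  have brs1 : ∀ p q r, br (p - q) r = br p r - br q r := fun p q r => by
    rw [sub_eq_add_neg, brl, brn1, ← sub_eq_add_neg]
  have brs2 : ∀ p q r, br p (q - r) = br p q - br p r := fun p q r => by
    rw [sub_eq_add_neg, brr, brn2, ← sub_eq_add_neg]
  have trsu1 : ∀ p q r s, tr (p - q) r s = tr p r s - tr q r s := fun p q r s => by
    rw [sub_eq_add_neg, t1a, trn1, ← sub_eq_add_neg]
  have trsu2 : ∀ p q r s, tr p (q - r) s = tr p q s - tr p r s := fun p q r s => by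
    rw [sub_eq_add_neg, t2a, trn2, ← sub_eq_add_neg]
  have trsu3 : ∀ p q r s, tr p q (r - s) = tr p q r - tr p q s := fun p q r s => by
    rw [sub_eq_add_neg, t3a, trn3, ← sub_eq_add_neg]
  have ρsu : ∀ p q, ρ (p - q) = ρ p - ρ q := fun p q => by
    rw [sub_eq_add_neg, ρa, ρn, ← sub_eq_add_neg]
  have μsu1 : ∀ p q r, μ (p - q) r = μ p r - μ q r := fun p q r => by
    rw [sub_eq_add_neg, μ1a, μn1, ← sub_eq_add_neg]
  have μsu2 : ∀ p q r, μ p (q - r) = μ p q - μ p r := fun p q r => by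
    rw [sub_eq_add_neg, μ2a, μn2, ← sub_eq_add_neg]
  have ρ0 : ρ (0 : g) = 0 := by
    have h := ρs (0 : K) 0; rwa [zero_smul, zero_smul] at h
  -- basic lemmas
  have lemA : ∀ p m, ϱ p (T m) = T (ρ (T p) m) := fun p m => by
    rw [hϱ, rrb1 p m, map_sub]; abel
  have lemB : ∀ p q m, ϖ p q (T m) = T (μ (T p) (T q) m) := fun p q m => by
    rw [hϖ, rrb2 m p q]
    simp only [map_sub, map_add]; abel
  have Dskewp : ∀ p q m, Dmap K br ρ μ p q m = -Dmap K br ρ μ q p m := fun p q m => by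
    have e : ρ (br p q) m = -ρ (br q p) m := by rw [bsk p q, ρn, LinearMap.neg_apply]
    simp only [Dmap, LinearMap.sub_apply, LinearMap.add_apply, Module.End.mul_apply,
      LinearMap.neg_apply]
    linear_combination (norm := module) -e
  have Dnegp1 : ∀ p q m, Dmap K br ρ μ (-p) q m = -Dmap K br ρ μ p q m := fun p q m => by
    simp only [Dmap, LinearMap.sub_apply, LinearMap.add_apply, Module.End.mul_apply,
      LinearMap.neg_apply, μn1, μn2, ρn, brn1, map_neg]
    module
  have lemD : ∀ x y z m, Dmap K br ρ μ (br x y) z m + Dmap K br ρ μ (br y z) x m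
      + Dmap K br ρ μ (br z x) y m = 0 := fun x y z m => by
    have fA1 := LinearMap.congr_fun (ra2 z x y) m
    have fA2 := LinearMap.congr_fun (ra2 x y z) m
    have fA3 := LinearMap.congr_fun (ra2 y z x) m
    have fB1 := LinearMap.congr_fun (ra1 x y z) m
    have fB2 := LinearMap.congr_fun (ra1 y z x) m
    have fB3 := LinearMap.congr_fun (ra1 z x y) m
    have fC1 := LinearMap.congr_fun (ra3 x y z) m
    have fC2 := LinearMap.congr_fun (ra3 y z x) m
    have fC3 := LinearMap.congr_fun (ra3 z x y) m
    have fE := congrArg (fun t => ρ t m) (ly3 x y z)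
    simp only [Dmap, LinearMap.sub_apply, LinearMap.add_apply, Module.End.mul_apply,
      LinearMap.neg_apply, LinearMap.zero_apply, map_add, map_sub, map_neg, map_zero,
      ρa, ρn, ρsu, ρ0] at fA1 fA2 fA3 fB1 fB2 fB3 fC1 fC2 fC3 fE ⊢
    linear_combination (norm := module) fA1 + fA2 + fA3 - fB1 - fB2 - fB3 + fC1 + fC2 + fC3 - fE
  have lemE : ∀ p q r s m, Dmap K br ρ μ (tr p q r) s m + Dmap K br ρ μ r (tr p q s) m
      = Dmap K br ρ μ p q (Dmap K br ρ μ r s m) - Dmap K br ρ μ r s (Dmap K br ρ μ p q m) :=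
      fun p q r s m => by
    have g1 := LinearMap.congr_fun (ra5 p q s r) m
    have g2 := LinearMap.congr_fun (ra5 p q r s) m
    have g3 := LinearMap.congr_fun (ra3 p q r) (ρ s m)
    have g4 := LinearMap.congr_fun (ra3 p q s) (ρ r m)
    have g5 := congrArg (fun t => ρ s t) (LinearMap.congr_fun (ra3 p q r) m)
    have g6 := congrArg (fun t => ρ r t) (LinearMap.congr_fun (ra3 p q s) m)
    have g7 := congrArg (fun t => ρ t m) (ly6 p q r s)
    have g8 := LinearMap.congr_fun (ra3 p q (br r s)) m
    simp only [Dmap, LinearMap.sub_apply, LinearMap.add_apply, Module.End.mul_apply,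
      LinearMap.neg_apply, LinearMap.zero_apply, map_add, map_sub, map_neg, map_zero,
      ρa, ρn, ρsu, ρ0] at g1 g2 g3 g4 g5 g6 g7 g8 ⊢
    linear_combination (norm := module) g1 - g2 + g3 - g4 - g5 + g6 + g7 - g8
  have lem0 : ∀ u v x, Dmap K (fun p q : V => ρ (T p) q - ρ (T q) p) ϱ ϖ u v x
      = tr (T u) (T v) x + T (μ (T u) x v) - T (μ (T v) x u) := fun u v x => by
    simp only [Dmap, LinearMap.sub_apply, LinearMap.add_apply, Module.End.mul_apply]
    rw [hϱ v x, hϱ u x]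
    simp only [map_add, lemA]
    simp only [hϖ, hϱ]
    rw [← rrb1 u v]
    have e1 := ly3 (T u) (T v) x
    have e2 := bsk (T u) (br (T v) x)
    have e3 := bsk (T v) (br (T u) x)
    have e4 : br (br (T u) x) (T v) = -br (br x (T u)) (T v) := by rw [bsk (T u) x, brn1]
    have e5 := tsk x (T v) (T u)
    have TO1 : T (ρ (br x (T v)) u) = -T (ρ (br (T v) x) u) := by
      rw [bsk x (T v), ρn, LinearMap.neg_apply, map_neg]
    have TO2 : T (ρ (br x (T u)) v) = -T (ρ (br (T u) x) v) := by
      rw [bsk x (T u), ρn, LinearMap.neg_apply, map_neg]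
    simp only [Dmap, LinearMap.sub_apply, LinearMap.add_apply, Module.End.mul_apply, LinearMap.neg_apply, LinearMap.smul_apply, LinearMap.zero_apply, map_add, map_sub, map_neg, map_smul, map_zero, brl, brr, brsl, brsr, brn1, brn2, brs1, brs2, t1a, t2a, t3a, t1s, t2s, t3s, trn1, trn2, trn3, trsu1, trsu2, trsu3, ρa, ρs, ρn, ρsu, ρ0, μ1a, μ2a, μ1s, μ2s, μn1, μn2, μsu1, μsu2]
    linear_combination (norm := module) e5 + e2 - e3 + e4 - e1 + TO1 - TO2
  refine ⟨⟨?_, ?_⟩, ⟨?_, ?_, ?_, ?_⟩, ?_, ?_, ?_, ?_, ?_⟩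
  · intro p q; ext x
    simp only [hϱ, Dmap, LinearMap.sub_apply, LinearMap.add_apply, Module.End.mul_apply, LinearMap.neg_apply, LinearMap.smul_apply, LinearMap.zero_apply, map_add, map_sub, map_neg, map_smul, map_zero, brl, brr, brsl, brsr, brn1, brn2, brs1, brs2, t1a, t2a, t3a, t1s, t2s, t3s, trn1, trn2, trn3, trsu1, trsu2, trsu3, ρa, ρs, ρn, ρsu, ρ0, μ1a, μ2a, μ1s, μ2s, μn1, μn2, μsu1, μsu2]
    module
  · intro s p; ext x
    simp only [hϱ, Dmap, LinearMap.sub_apply, LinearMap.add_apply, Module.End.mul_apply, LinearMap.neg_apply, LinearMap.smul_apply, LinearMap.zero_apply, map_add, map_sub, map_neg, map_smul, map_zero, brl, brr, brsl, brsr, brn1, brn2, brs1, brs2, t1a, t2a, t3a, t1s, t2s, t3s, trn1, trn2, trn3, trsu1, trsu2, trsu3, ρa, ρs, ρn, ρsu, ρ0, μ1a, μ2a, μ1s, μ2s, μn1, μn2, μsu1, μsu2]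
    module
  · intro p q r; ext x
    simp only [hϖ, Dmap, LinearMap.sub_apply, LinearMap.add_apply, Module.End.mul_apply, LinearMap.neg_apply, LinearMap.smul_apply, LinearMap.zero_apply, map_add, map_sub, map_neg, map_smul, map_zero, brl, brr, brsl, brsr, brn1, brn2, brs1, brs2, t1a, t2a, t3a, t1s, t2s, t3s, trn1, trn2, trn3, trsu1, trsu2, trsu3, ρa, ρs, ρn, ρsu, ρ0, μ1a, μ2a, μ1s, μ2s, μn1, μn2, μsu1, μsu2]
    module
  · intro s p q; ext x
    simp only [hϖ, Dmap, LinearMap.sub_apply, LinearMap.add_apply, Module.End.mul_apply, LinearMap.neg_apply, LinearMap.smul_apply, LinearMap.zero_apply, map_add, map_sub, map_neg, map_smul, map_zero, brl, brr, brsl, brsr, brn1, brn2, brs1, brs2, t1a, t2a, t3a, t1s, t2s, t3s, trn1, trn2, trn3, trsu1, trsu2, trsu3, ρa, ρs, ρn, ρsu, ρ0, μ1a, μ2a, μ1s, μ2s, μn1, μn2, μsu1, μsu2]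
    module
  · intro p q r; ext x
    simp only [hϖ, Dmap, LinearMap.sub_apply, LinearMap.add_apply, Module.End.mul_apply, LinearMap.neg_apply, LinearMap.smul_apply, LinearMap.zero_apply, map_add, map_sub, map_neg, map_smul, map_zero, brl, brr, brsl, brsr, brn1, brn2, brs1, brs2, t1a, t2a, t3a, t1s, t2s, t3s, trn1, trn2, trn3, trsu1, trsu2, trsu3, ρa, ρs, ρn, ρsu, ρ0, μ1a, μ2a, μ1s, μ2s, μn1, μn2, μsu1, μsu2]
    module
  · intro s p q; ext x
    simp only [hϖ, Dmap, LinearMap.sub_apply, LinearMap.add_apply, Module.End.mul_apply, LinearMap.neg_apply, LinearMap.smul_apply, LinearMap.zero_apply, map_add, map_sub, map_neg, map_smul, map_zero, brl, brr, brsl, brsr, brn1, brn2, brs1, brs2, t1a, t2a, t3a, t1s, t2s, t3s, trn1, trn2, trn3, trsu1, trsu2, trsu3, ρa, ρs, ρn, ρsu, ρ0, μ1a, μ2a, μ1s, μ2s, μn1, μn2, μsu1, μsu2]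
    module
  · -- axiom 1
    intro u v w; ext x
    simp only [LinearMap.sub_apply, LinearMap.add_apply, Module.End.mul_apply,
      LinearMap.zero_apply]
    rw [hϱ v x, hϱ u x]
    simp only [hϖ]
    rw [← rrb1 u v]
    have i1 := rrb2 (ρ x v) u w
    have i2 := rrb2 (ρ x u) v w
    have i3 := tsk x (br (T u) (T v)) (T w)
    have i4 := ly4 (T u) (T v) x (T w)
    have i5 : tr (br (T u) x) (T v) (T w) = -tr (br x (T u)) (T v) (T w) := by
      rw [bsk (T u) x, trn1]
    have L1T := congrArg (fun m => T m) (LinearMap.congr_fun (ra1 (T u) x (T w)) v)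
    have L2T := congrArg (fun m => T m) (LinearMap.congr_fun (ra1 (T v) x (T w)) u)
    have i7T := congrArg (fun m => T m) (lemD (T v) x (T u) w)
    have i8T := congrArg (fun m => T m) (Dskewp x (br (T u) (T v)) w)
    have i9 : Dmap K br ρ μ (br (T u) x) (T v) w = -Dmap K br ρ μ (br x (T u)) (T v) w := by
      rw [bsk (T u) x, Dnegp1]
    have i9T := congrArg (fun m => T m) i9
    simp only [Dmap, LinearMap.sub_apply, LinearMap.add_apply, Module.End.mul_apply, LinearMap.neg_apply, LinearMap.smul_apply, LinearMap.zero_apply, map_add, map_sub, map_neg, map_smul, map_zero, brl, brr, brsl, brsr, brn1, brn2, brs1, brs2, t1a, t2a, t3a, t1s, t2s, t3s, trn1, trn2, trn3, trsu1, trsu2, trsu3, ρa, ρs, ρn, ρsu, ρ0, μ1a, μ2a, μ1s, μ2s, μn1, μn2, μsu1, μsu2] at i1 i2 i3 i4 i5 L1T L2T i7T i8T i9T ⊢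
    linear_combination (norm := module) i3 - i4 + i5 - i1 + L1T + i2 - L2T - i8T + i7T - i9T
  · -- axiom 2
    intro u v w; ext x
    simp only [LinearMap.sub_apply, LinearMap.add_apply, Module.End.mul_apply,
      LinearMap.zero_apply]
    rw [hϖ u w x, hϖ u v x]
    simp only [map_sub, map_add, lemA]
    simp only [hϖ, hϱ]
    rw [← rrb1 v w]
    have j1 := ly6 x (T u) (T v) (T w)
    have j2 := bsk (tr x (T u) (T v)) (T w)
    have j3 := congrArg (fun m => T m) (LinearMap.congr_fun (ra3 x (T u) (T v)) w)
    have j4 := congrArg (fun m => T m) (LinearMap.congr_fun (ra3 x (T u) (T w)) v)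
    have j5 := congrArg (fun m => T m) (LinearMap.congr_fun (ra2 x (T v) (T w)) u)
    simp only [Dmap, LinearMap.sub_apply, LinearMap.add_apply, Module.End.mul_apply, LinearMap.neg_apply, LinearMap.smul_apply, LinearMap.zero_apply, map_add, map_sub, map_neg, map_smul, map_zero, brl, brr, brsl, brsr, brn1, brn2, brs1, brs2, t1a, t2a, t3a, t1s, t2s, t3s, trn1, trn2, trn3, trsu1, trsu2, trsu3, ρa, ρs, ρn, ρsu, ρ0, μ1a, μ2a, μ1s, μ2s, μn1, μn2, μsu1, μsu2] at j1 j2 j3 j4 j5 ⊢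
    linear_combination (norm := module) j1 + j2 + j3 - j4 + j5
  · -- axiom 3
    intro u v w; ext x
    simp only [LinearMap.sub_apply, Module.End.mul_apply]
    rw [hϱ w x]
    simp only [map_add, map_sub, lem0, lemA]
    simp only [hϱ]
    rw [← rrb2 u v w]
    have k0 := rrb2 u v (ρ x w)
    have k1 := congrArg (fun m => T m) (LinearMap.congr_fun (ra3 (T u) (T v) x) w)
    have k2 := congrArg (fun m => T m) (LinearMap.congr_fun (ra2 (T v) (T w) x) u)
    have k3 := congrArg (fun m => T m) (LinearMap.congr_fun (ra2 (T u) (T w) x) v)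
    have k4 := ly6 (T u) (T v) (T w) x
    simp only [Dmap, LinearMap.sub_apply, LinearMap.add_apply, Module.End.mul_apply, LinearMap.neg_apply, LinearMap.smul_apply, LinearMap.zero_apply, map_add, map_sub, map_neg, map_smul, map_zero, brl, brr, brsl, brsr, brn1, brn2, brs1, brs2, t1a, t2a, t3a, t1s, t2s, t3s, trn1, trn2, trn3, trsu1, trsu2, trsu3, ρa, ρs, ρn, ρsu, ρ0, μ1a, μ2a, μ1s, μ2s, μn1, μn2, μsu1, μsu2] at k0 k1 k2 k3 k4 ⊢
    linear_combination (norm := module) -k4 - k0 + k1 + k2 - k3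
  · -- axiom 4
    intro u v w t; ext x
    simp only [LinearMap.sub_apply, LinearMap.add_apply, Module.End.mul_apply,
      LinearMap.zero_apply]
    rw [hϖ u v x, hϖ u w x, hϖ u t x]
    simp only [map_sub, map_add, lemB, lem0]
    simp only [hϖ]
    rw [← rrb2 v w t]
    have q1 := ly7 x (T u) (T v) (T w) (T t)
    have q2 := tsk (T v) (tr x (T u) (T w)) (T t)
    have q3 := congrArg (fun m => T m) (lemE x (T u) (T v) (T w) t)
    have q4 := congrArg (fun m => T m) (Dskewp (tr x (T u) (T w)) (T v) t)
    have q5 := congrArg (fun m => T m) (LinearMap.congr_fun (ra5 x (T u) (T v) (T t)) w)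
    have q6 := congrArg (fun m => T m) (LinearMap.congr_fun (ra5 x (T u) (T w) (T t)) v)
    have q7 := congrArg (fun m => T m) (LinearMap.congr_fun (ra4 x (T v) (T w) (T t)) u)
    have q8 := rrb2 v w (Dmap K br ρ μ x (T u) t)
    have q9 := rrb2 v w (μ x (T t) u)
    simp only [Dmap, LinearMap.sub_apply, LinearMap.add_apply, Module.End.mul_apply, LinearMap.neg_apply, LinearMap.smul_apply, LinearMap.zero_apply, map_add, map_sub, map_neg, map_smul, map_zero, brl, brr, brsl, brsr, brn1, brn2, brs1, brs2, t1a, t2a, t3a, t1s, t2s, t3s, trn1, trn2, trn3, trsu1, trsu2, trsu3, ρa, ρs, ρn, ρsu, ρ0, μ1a, μ2a, μ1s, μ2s, μn1, μn2, μsu1, μsu2] at q1 q2 q3 q4 q5 q6 q7 q8 q9 ⊢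
    linear_combination (norm := module) -q1 - q2 - q3 + q4 + q5 - q6 + q7 - q8 + q9
  · -- axiom 5
    intro u v w t; ext x
    simp only [LinearMap.sub_apply, LinearMap.add_apply, Module.End.mul_apply]
    rw [hϖ w t x]
    simp only [map_sub, map_add, lem0, lemB]
    simp only [hϖ]
    rw [← rrb2 u v w, ← rrb2 u v t]
    have s1 := ly7 (T u) (T v) x (T w) (T t)
    have s2 := congrArg (fun m => T m) (lemE (T u) (T v) x (T w) t)
    have s3 := congrArg (fun m => T m) (LinearMap.congr_fun (ra5 (T u) (T v) x (T t)) w)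
    have s4 := congrArg (fun m => T m) (LinearMap.congr_fun (ra4 (T v) x (T w) (T t)) u)
    have s5 := congrArg (fun m => T m) (LinearMap.congr_fun (ra4 (T u) x (T w) (T t)) v)
    have r1 := rrb2 u v (Dmap K br ρ μ x (T w) t)
    have r2 := rrb2 u v (μ x (T t) w)
    simp only [Dmap, LinearMap.sub_apply, LinearMap.add_apply, Module.End.mul_apply, LinearMap.neg_apply, LinearMap.smul_apply, LinearMap.zero_apply, map_add, map_sub, map_neg, map_smul, map_zero, brl, brr, brsl, brsr, brn1, brn2, brs1, brs2, t1a, t2a, t3a, t1s, t2s, t3s, trn1, trn2, trn3, trsu1, trsu2, trsu3, ρa, ρs, ρn, ρsu, ρ0, μ1a, μ2a, μ1s, μ2s, μn1, μn2, μsu1, μsu2] at s1 s2 s3 s4 s5 r1 r2 ⊢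
    linear_combination (norm := module) -s1 - s2 + s3 - s4 + s5 + r1 - r2
end

section
/- Let T:V→𝔤 be a relative Rota-Baxter operator on a Lie-Yamaguti algebra 𝔤 with respect to a representation (V;ρ,μ). Then the linear map N_T:𝔤⊕V→𝔤⊕V defined by N_T(x+u)=Tu is a Nijenhuis operator on the semidirect product Lie-Yamaguti algebra 𝔤⋉_{ρ,μ}V. -/
open scoped BigOperators

variable (K : Type*) [Field K]

theorem stmt9 {g V : Type*} [AddCommGroup g] [Module K g] [AddCommGroup V] [Module K V]
    (br : g → g → g) (tr : g → g → g → g)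
    (ρ : g → Module.End K V) (μ : g → g → Module.End K V)
    (hLY : IsLY K br tr) (hrep : IsRep K br tr ρ μ)
    (T : V →ₗ[K] g) (hT : IsRRB K br tr ρ μ T) :
    IsNijenhuis (fun p q : g × V => (br p.1 q.1, ρ p.1 q.2 - ρ q.1 p.2))
      (fun p q r : g × V =>
        (tr p.1 q.1 r.1, Dmap K br ρ μ p.1 q.1 r.2 + μ q.1 r.1 p.2 - μ p.1 r.1 q.2))
      (fun p : g × V => ((T p.2 : g), (0 : V))) := by
  obtain ⟨hT1, hT2⟩ := hT
  constructor
  · rintro ⟨x, u⟩ ⟨y, v⟩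
    simp only [Prod.mk_add_mk, Prod.mk_sub_mk, map_zero, Prod.mk.injEq]
    refine ⟨?_, by abel⟩
    rw [hT1]
    congr 1
    abel
  · rintro ⟨x, u⟩ ⟨y, v⟩ ⟨z, w⟩
    simp only [Prod.mk_add_mk, Prod.mk_sub_mk, map_zero, Prod.mk.injEq]
    refine ⟨?_, by abel⟩
    rw [hT2]
    congr 1
    abel
end

section
/- Let T:V→𝔤 be a relative Rota-Baxter operator on a Lie-Yamaguti algebra (𝔤,[·,·],⟦·,·,·⟧) with respect to a representation (V;ρ,μ). For 𝔛 = a∧b ∈ ∧²𝔤, define δ(𝔛):V→𝔤 by δ(𝔛)v := T(D(a,b)v) − ⟦a,b,Tv⟧. Then δ₁ᵀ(δ(𝔛))(u,v) := ϱ(u)δ(𝔛)(v) − ϱ(v)δ(𝔛)(u) − δ(𝔛)([u,v]_T) = 0 for all u,v ∈ V, where ϱ(u)x := [Tu,x]+T(ρ(x)u) and [u,v]_T := ρ(Tu)v−ρ(Tv)u. -/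
open scoped BigOperators

variable (K : Type*) [Field K]

/-!
Since `[Tu, Tw] = T[u, w]_T`, the element `ϱ(u)δ(𝔛)(v)` is `-[Tu, ⟦a,b,Tv⟧]` plus a term in the
image of `T`. After antisymmetrizing in `u, v`, the identity `ρ(⟦a,b,x⟧) = [D(a,b), ρ(x)]` collapses
the `T`-terms into `T(D(a,b)[u,v]_T)`, and the bracket terms form `⟦a,b,[Tu,Tv]⟧ = ⟦a,b,T[u,v]_T⟧`
because `⟦a,b,·⟧` is a derivation of `[·,·]`. Together this is exactly `δ(𝔛)([u,v]_T)`.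
-/

section RelativeRotaBaxter

variable {K} {g V : Type*} [AddCommGroup g] [Module K g] [AddCommGroup V] [Module K V]
  {br : g → g → g} {tr : g → g → g → g} {ρ : g → Module.End K V} {μ : g → g → Module.End K V}
  {T : V →ₗ[K] g}

lemma IsLin.map_sub {f : g → V} (hf : IsLin K f) (x y : g) : f (x - y) = f x - f y :=
  (AddMonoidHom.mk' f hf.1).map_sub x y

lemma IsBilin.map_sub_right {f : g → g → V} (hf : IsBilin K f) (x y z : g) :
    f x (y - z) = f x y - f x z :=
  (AddMonoidHom.mk' (f x) (hf.2.2.1 x)).map_sub y z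

lemma IsRep.rho_tr_apply (hrep : IsRep K br tr ρ μ) (x y z : g) (w : V) :
    ρ (tr x y z) w = Dmap K br ρ μ x y (ρ z w) - ρ z (Dmap K br ρ μ x y w) := by
  rw [hrep.2.2.2.2.1 x y z, LinearMap.sub_apply, Module.End.mul_apply, Module.End.mul_apply]

lemma IsRRB.tr_T_bracket (hLY : IsLY K br tr) (hT : IsRRB K br tr ρ μ T) (a b : g) (u v : V) :
    tr a b (T (ρ (T u) v - ρ (T v) u)) = br (tr a b (T u)) (T v) + br (T u) (tr a b (T v)) := by
  rw [← hT.1, hLY.2.2.2.2.2.2.1]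

lemma IsRRB.rep_apply_delta (hLY : IsLY K br tr) (hrep : IsRep K br tr ρ μ)
    (hT : IsRRB K br tr ρ μ T) {a b : g} {δX : V → g}
    (hδ : ∀ v, δX v = T (Dmap K br ρ μ a b v) - tr a b (T v))
    {ϱ : V → Module.End K g} (hϱ : ∀ u x, ϱ u x = br (T u) x + T (ρ x u)) (u v : V) :
    ϱ u (δX v) = T (ρ (T u) (Dmap K br ρ μ a b v)) - br (T u) (tr a b (T v))
      - T (Dmap K br ρ μ a b (ρ (T v) u) - ρ (T v) (Dmap K br ρ μ a b u)) := by
  rw [hϱ, hδ, hLY.1.map_sub_right, hrep.1.map_sub, LinearMap.sub_apply, map_sub, hT.1,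
    hrep.rho_tr_apply]
  simp only [map_sub]
  abel

end RelativeRotaBaxter

theorem stmt10 {g V : Type*} [AddCommGroup g] [Module K g] [AddCommGroup V] [Module K V]
    (br : g → g → g) (tr : g → g → g → g)
    (ρ : g → Module.End K V) (μ : g → g → Module.End K V)
    (hLY : IsLY K br tr) (hrep : IsRep K br tr ρ μ)
    (T : V →ₗ[K] g) (hT : IsRRB K br tr ρ μ T)
    (a b : g)
    (δX : V → g) (hδ : ∀ v, δX v = T (Dmap K br ρ μ a b v) - tr a b (T v))
    (ϱ : V → Module.End K g) (hϱ : ∀ u x, ϱ u x = br (T u) x + T (ρ x u)) :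
    ∀ u v : V, ϱ u (δX v) - ϱ v (δX u) - δX (ρ (T u) v - ρ (T v) u) = 0 := by
  intro u v
  rw [hT.rep_apply_delta hLY hrep hδ hϱ, hT.rep_apply_delta hLY hrep hδ hϱ, hδ,
    hT.tr_T_bracket hLY, hLY.2.2.1 (tr a b (T u)) (T v)]
  simp only [map_sub]
  abel
end

section
/- Let T:V→𝔤 be a relative Rota-Baxter operator on a Lie-Yamaguti algebra (𝔤,[·,·],⟦·,·,·⟧) with respect to a representation (V;ρ,μ). For a,b ∈ 𝔤 define δ(a,b):V→𝔤 by δ(a,b)v := T(D(a,b)v) − ⟦a,b,Tv⟧. Then δ₂ᵀ(δ(a,b))(u,v,w) := D_{ϱ,ϖ}(u,v)δ(a,b)(w) + ϖ(v,w)δ(a,b)(u) − ϖ(u,w)δ(a,b)(v) − δ(a,b)(⟦u,v,w⟧_T) = 0 for all u,v,w ∈ V, where ϖ(u,v)x := ⟦x,Tu,Tv⟧−T(D(x,Tu)v−μ(x,Tv)u), D_{ϱ,ϖ}(u,v)x := ⟦Tu,Tv,x⟧−T(μ(Tv,x)u−μ(Tu,x)v), and ⟦u,v,w⟧_T := D(Tu,Tv)w+μ(Tv,Tw)u−μ(Tu,Tw)v.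 -/
open scoped BigOperators

variable (K : Type*) [Field K]

section MyHelpers
variable {K : Type*} [Field K] {g W : Type*} [AddCommGroup g] [Module K g]
  [AddCommGroup W] [Module K W]

lemma myLin_neg {f : g → W} (hf : IsLin K f) (p : g) : f (-p) = - f p := by
  have := hf.2 (-1 : K) p; simpa using this

lemma myLin_sub {f : g → W} (hf : IsLin K f) (p q : g) : f (p - q) = f p - f q := by
  rw [sub_eq_add_neg, hf.1, myLin_neg hf, ← sub_eq_add_neg]

lemma myBilin_neg_left {f : g → g → W} (hf : IsBilin K f) (p c : g) :
    f (-p) c = - f p c := by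
  have := hf.2.1 (-1 : K) p c; simpa using this

lemma myBilin_sub_left {f : g → g → W} (hf : IsBilin K f) (p q c : g) :
    f (p - q) c = f p c - f q c := by
  rw [sub_eq_add_neg, hf.1, myBilin_neg_left hf, ← sub_eq_add_neg]

lemma myBilin_neg_right {f : g → g → W} (hf : IsBilin K f) (c p : g) :
    f c (-p) = - f c p := by
  have := hf.2.2.2 (-1 : K) c p; simpa using this

lemma myBilin_sub_right {f : g → g → W} (hf : IsBilin K f) (c p q : g) :
    f c (p - q) = f c p - f c q := by
  rw [sub_eq_add_neg, hf.2.2.1, myBilin_neg_right hf, ← sub_eq_add_neg]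

lemma myTrilin_neg_left {f : g → g → g → W} (hf : IsTrilin K f) (p c d : g) :
    f (-p) c d = - f p c d := by
  have := hf.2.1 (-1 : K) p c d; simpa using this

lemma myTrilin_sub_left {f : g → g → g → W} (hf : IsTrilin K f) (p q c d : g) :
    f (p - q) c d = f p c d - f q c d := by
  rw [sub_eq_add_neg, hf.1, myTrilin_neg_left hf, ← sub_eq_add_neg]

lemma myTrilin_neg_third {f : g → g → g → W} (hf : IsTrilin K f) (c d p : g) :
    f c d (-p) = - f c d p := by
  have := hf.2.2.2.2.2 (-1 : K) c d p; simpa using this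

lemma myTrilin_sub_third {f : g → g → g → W} (hf : IsTrilin K f) (c d p q : g) :
    f c d (p - q) = f c d p - f c d q := by
  rw [sub_eq_add_neg, hf.2.2.2.2.1, myTrilin_neg_third hf, ← sub_eq_add_neg]

end MyHelpers

section MyKey
variable {K : Type*} [Field K] {g V : Type*} [AddCommGroup g] [Module K g]
  [AddCommGroup V] [Module K V]
  (br : g → g → g) (tr : g → g → g → g)
  (ρ : g → Module.End K V) (μ : g → g → Module.End K V)

lemma myDmap_sub_left (hbr : IsBilin K br) (hρ : IsLin K ρ) (hμ : IsBilin K μ)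
    (p q y : g) :
    Dmap K br ρ μ (p - q) y = Dmap K br ρ μ p y - Dmap K br ρ μ q y := by
  simp only [Dmap, myBilin_sub_right hμ, myBilin_sub_left hμ, myLin_sub hρ,
    myBilin_sub_left hbr, sub_mul, mul_sub]
  abel

lemma myDmap_swap (hanti : ∀ x y, br x y = - br y x) (hρ : IsLin K ρ) (p q : g) :
    Dmap K br ρ μ q p = - Dmap K br ρ μ p q := by
  rw [Dmap, Dmap, hanti q p, myLin_neg hρ]; abel

lemma myKeyD (hρL : IsLin K ρ)
    (hLY7 : ∀ x y z w, tr x y (br z w) = br (tr x y z) w + br z (tr x y w))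
    (hR3 : ∀ x y z, ρ (tr x y z) = Dmap K br ρ μ x y * ρ z - ρ z * Dmap K br ρ μ x y)
    (hR5 : ∀ x y z w, μ (tr x y z) w + μ z (tr x y w) =
      Dmap K br ρ μ x y * μ z w - μ z w * Dmap K br ρ μ x y)
    (a b x y : g) :
    Dmap K br ρ μ a b * Dmap K br ρ μ x y - Dmap K br ρ μ x y * Dmap K br ρ μ a b
      = Dmap K br ρ μ (tr a b x) y + Dmap K br ρ μ x (tr a b y) := by
  have h3x := hR3 a b x
  have h3y := hR3 a b y
  have h3b := hR3 a b (br x y)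
  have h5yx := hR5 a b y x
  have h5xy := hR5 a b x y
  have h7 : ρ (br (tr a b x) y) + ρ (br x (tr a b y)) = ρ (tr a b (br x y)) := by
    rw [hLY7 a b x y, hρL.1]
  simp only [Dmap] at h3x h3y h3b h5yx h5xy ⊢
  linear_combination (norm := noncomm_ring)
    (-h5yx + h5xy - h3x * ρ y + ρ y * h3x - ρ x * h3y + h3y * ρ x + h7 + h3b)

end MyKey

theorem stmt11 {g V : Type*} [AddCommGroup g] [Module K g] [AddCommGroup V] [Module K V]
    (br : g → g → g) (tr : g → g → g → g)
    (ρ : g → Module.End K V) (μ : g → g → Module.End K V)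
    (hLY : IsLY K br tr) (hrep : IsRep K br tr ρ μ)
    (T : V →ₗ[K] g) (hT : IsRRB K br tr ρ μ T)
    (a b : g)
    (δX : V → g) (hδ : ∀ v, δX v = T (Dmap K br ρ μ a b v) - tr a b (T v))
    (ϖ : V → V → Module.End K g)
    (hϖ : ∀ u v x, ϖ u v x = tr x (T u) (T v) - T (Dmap K br ρ μ x (T u) v - μ x (T v) u))
    (Dd : V → V → Module.End K g)
    (hD : ∀ u v x, Dd u v x = tr (T u) (T v) x - T (μ (T v) x u - μ (T u) x v)) :
    ∀ u v w : V,
      Dd u v (δX w) + ϖ v w (δX u) - ϖ u w (δX v)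
        - δX (Dmap K br ρ μ (T u) (T v) w + μ (T v) (T w) u - μ (T u) (T w) v) = 0 := by
  obtain ⟨hbrB, htrT, hbrA, htrA, _, _, hLY7, hLY8⟩ := hLY
  obtain ⟨hρL, hμB, hR1, hR2, hR3, hR5a, hR5⟩ := hrep
  obtain ⟨hTbr, hTtr⟩ := hT
  intro u v w
  -- RRB instances (with split right-hand sides)
  have r1 : tr (T u) (T v) (T (Dmap K br ρ μ a b w))
      = T (Dmap K br ρ μ (T u) (T v) (Dmap K br ρ μ a b w))
        + T (μ (T v) (T (Dmap K br ρ μ a b w)) u)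
        - T (μ (T u) (T (Dmap K br ρ μ a b w)) v) := by
    rw [hTtr u v (Dmap K br ρ μ a b w), map_sub, map_add]
  have r2 : tr (T (Dmap K br ρ μ a b u)) (T v) (T w)
      = T (Dmap K br ρ μ (T (Dmap K br ρ μ a b u)) (T v) w)
        + T (μ (T v) (T w) (Dmap K br ρ μ a b u))
        - T (μ (T (Dmap K br ρ μ a b u)) (T w) v) := by
    rw [hTtr (Dmap K br ρ μ a b u) v w, map_sub, map_add]
  have r3 : tr (T (Dmap K br ρ μ a b v)) (T u) (T w)
      = T (Dmap K br ρ μ (T (Dmap K br ρ μ a b v)) (T u) w)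
        + T (μ (T u) (T w) (Dmap K br ρ μ a b v))
        - T (μ (T (Dmap K br ρ μ a b v)) (T w) u) := by
    rw [hTtr (Dmap K br ρ μ a b v) u w, map_sub, map_add]
  -- key identities mapped through T
  have e1 : T (Dmap K br ρ μ a b (Dmap K br ρ μ (T u) (T v) w))
        - T (Dmap K br ρ μ (T u) (T v) (Dmap K br ρ μ a b w))
      = T (Dmap K br ρ μ (tr a b (T u)) (T v) w)
        + T (Dmap K br ρ μ (T u) (tr a b (T v)) w) := by
    have h := DFunLike.congr_fun
      (myKeyD br tr ρ μ hρL hLY7 hR3 hR5 a b (T u) (T v)) w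
    simp only [LinearMap.sub_apply, LinearMap.add_apply, Module.End.mul_apply] at h
    rw [← map_sub, ← map_add, h]
  have e2 : T (μ (tr a b (T v)) (T w) u) + T (μ (T v) (tr a b (T w)) u)
      = T (Dmap K br ρ μ a b (μ (T v) (T w) u))
        - T (μ (T v) (T w) (Dmap K br ρ μ a b u)) := by
    have h := DFunLike.congr_fun (hR5 a b (T v) (T w)) u
    simp only [LinearMap.sub_apply, LinearMap.add_apply, Module.End.mul_apply] at h
    rw [← map_add, ← map_sub, h]
  have e3 : T (μ (tr a b (T u)) (T w) v) + T (μ (T u) (tr a b (T w)) v)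
      = T (Dmap K br ρ μ a b (μ (T u) (T w) v))
        - T (μ (T u) (T w) (Dmap K br ρ μ a b v)) := by
    have h := DFunLike.congr_fun (hR5 a b (T u) (T w)) v
    simp only [LinearMap.sub_apply, LinearMap.add_apply, Module.End.mul_apply] at h
    rw [← map_add, ← map_sub, h]
  have e4 : T (Dmap K br ρ μ (tr a b (T v)) (T u) w)
      = - T (Dmap K br ρ μ (T u) (tr a b (T v)) w) := by
    have h := DFunLike.congr_fun
      (myDmap_swap br ρ μ hbrA hρL (T u) (tr a b (T v))) w
    simp only [LinearMap.neg_apply] at h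
    rw [h, map_neg]
  have e5 : tr (tr a b (T v)) (T u) (T w) = - tr (T u) (tr a b (T v)) (T w) :=
    htrA (tr a b (T v)) (T u) (T w)
  -- unfold the cochain maps
  simp only [hδ, hϖ, hD]
  rw [← hTtr u v w, hLY8 a b (T u) (T v) (T w)]
  simp only [map_add, map_sub, myTrilin_sub_third htrT, myTrilin_sub_left htrT,
    myBilin_sub_left hμB, myBilin_sub_right hμB,
    myDmap_sub_left br ρ μ hbrB hρL hμB, LinearMap.sub_apply, LinearMap.add_apply]
  linear_combination (norm := module) r1 + r2 - r3 - e1 + e2 - e3 - e4 + e5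
end

section
/- Let T:V→𝔤 be a relative Rota-Baxter operator on a Lie-Yamaguti algebra 𝔤 with respect to a representation (V;ρ,μ), and 𝔗:V→𝔤 a linear map. Then T+t𝔗 is a relative Rota-Baxter operator for every scalar t if and only if the following five conditions hold for all u,v,w∈V: (1) [𝔗u,Tv]+[Tu,𝔗v] = T(ρ(𝔗u)v−ρ(𝔗v)u)+𝔗(ρ(Tu)v−ρ(Tv)u); (2) [𝔗u,𝔗v]=𝔗(ρ(𝔗u)v−ρ(𝔗v)u); (3) ⟦Tu,Tv,𝔗w⟧+⟦Tu,𝔗v,Tw⟧+⟦𝔗u,Tv,Tw⟧ = 𝔗(D(Tu,Tv)w+μ(Tv,Tw)u−μ(Tu,Tw)v)+T(D(Tu,𝔗v)w+D(𝔗u,Tv)w+μ(Tv,𝔗w)u+μ(𝔗v,Tw)u−μ(Tu,𝔗w)v−μ(𝔗u,Tw)v); (4) ⟦𝔗u,𝔗v,Tw⟧+⟦Tu,𝔗v,𝔗w⟧+⟦𝔗u,Tv,𝔗w⟧ = T(D(𝔗u,𝔗v)w+μ(𝔗v,𝔗w)u−μ(𝔗u,𝔗w)v)+𝔗(D(Tu,𝔗v)w+D(𝔗u,Tv)w+μ(Tv,𝔗w)u+μ(𝔗v,Tw)u−μ(Tu,𝔗w)v−μ(𝔗u,Tw)v);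 (5) ⟦𝔗u,𝔗v,𝔗w⟧=𝔗(D(𝔗u,𝔗v)w+μ(𝔗v,𝔗w)u−μ(𝔗u,𝔗w)v). -/
open scoped BigOperators

variable (K : Type*) [Field K]

section Aux

variable {M : Type*} [AddCommGroup M] [Module K M]

lemma quad_cancel [CharZero K] (c1 c2 : M)
    (h : ∀ t : K, t • c1 + t ^ 2 • c2 = 0) : c1 = 0 ∧ c2 = 0 := by
  have e2 : (2 : K) • c2 = 0 := by
    have comb : (2 : K) • c2 =
        ((2 : K) • c1 + (2 : K) ^ 2 • c2) - (2 : K) • ((1 : K) • c1 + (1 : K) ^ 2 • c2) := by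
      module
    rw [comb, h 1, h 2]; simp
  have hc2 : c2 = 0 := by
    have : c2 = (2 : K)⁻¹ • ((2 : K) • c2) := by
      rw [smul_smul, inv_mul_cancel₀ (two_ne_zero), one_smul]
    rw [e2, smul_zero] at this; exact this
  refine ⟨?_, hc2⟩
  have h1 := h 1
  rw [hc2, smul_zero, add_zero, one_smul] at h1
  exact h1

lemma cubic_cancel [CharZero K] (c1 c2 c3 : M)
    (h : ∀ t : K, t • c1 + t ^ 2 • c2 + t ^ 3 • c3 = 0) :
    c1 = 0 ∧ c2 = 0 ∧ c3 = 0 := by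
  have e3 : (6 : K) • c3 = 0 := by
    have comb : (6 : K) • c3 =
        ((3 : K) • c1 + (3 : K) ^ 2 • c2 + (3 : K) ^ 3 • c3)
          + (3 : K) • ((1 : K) • c1 + (1 : K) ^ 2 • c2 + (1 : K) ^ 3 • c3)
          - (3 : K) • ((2 : K) • c1 + (2 : K) ^ 2 • c2 + (2 : K) ^ 3 • c3) := by
      module
    rw [comb, h 1, h 2, h 3]; simp
  have hc3 : c3 = 0 := by
    have h6 : (6 : K) ≠ 0 := by norm_num
    have : c3 = (6 : K)⁻¹ • ((6 : K) • c3) := by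
      rw [smul_smul, inv_mul_cancel₀ h6, one_smul]
    rw [e3, smul_zero] at this; exact this
  have h' : ∀ t : K, t • c1 + t ^ 2 • c2 = 0 := by
    intro t
    have := h t
    rw [hc3, smul_zero, add_zero] at this
    exact this
  obtain ⟨hc1, hc2⟩ := quad_cancel K c1 c2 h'
  exact ⟨hc1, hc2, hc3⟩

end Aux

theorem stmt14 [CharZero K] {g V : Type*} [AddCommGroup g] [Module K g]
    [AddCommGroup V] [Module K V]
    (br : g → g → g) (tr : g → g → g → g)
    (ρ : g → Module.End K V) (μ : g → g → Module.End K V)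
    (hLY : IsLY K br tr) (hrep : IsRep K br tr ρ μ)
    (T 𝔗 : V →ₗ[K] g) (hT : IsRRB K br tr ρ μ T) :
    (∀ t : K, IsRRB K br tr ρ μ (T + t • 𝔗)) ↔
      ((∀ u v : V, br (𝔗 u) (T v) + br (T u) (𝔗 v)
          = T (ρ (𝔗 u) v - ρ (𝔗 v) u) + 𝔗 (ρ (T u) v - ρ (T v) u)) ∧
       (∀ u v : V, br (𝔗 u) (𝔗 v) = 𝔗 (ρ (𝔗 u) v - ρ (𝔗 v) u)) ∧
       (∀ u v w : V,
          tr (T u) (T v) (𝔗 w) + tr (T u) (𝔗 v) (T w) + tr (𝔗 u) (T v) (T w)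
            = 𝔗 (Dmap K br ρ μ (T u) (T v) w + μ (T v) (T w) u - μ (T u) (T w) v)
              + T (Dmap K br ρ μ (T u) (𝔗 v) w + Dmap K br ρ μ (𝔗 u) (T v) w
                  + μ (T v) (𝔗 w) u + μ (𝔗 v) (T w) u
                  - μ (T u) (𝔗 w) v - μ (𝔗 u) (T w) v)) ∧
       (∀ u v w : V,
          tr (𝔗 u) (𝔗 v) (T w) + tr (T u) (𝔗 v) (𝔗 w) + tr (𝔗 u) (T v) (𝔗 w)
            = T (Dmap K br ρ μ (𝔗 u) (𝔗 v) w + μ (𝔗 v) (𝔗 w) u - μ (𝔗 u) (𝔗 w) v)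
              + 𝔗 (Dmap K br ρ μ (T u) (𝔗 v) w + Dmap K br ρ μ (𝔗 u) (T v) w
                  + μ (T v) (𝔗 w) u + μ (𝔗 v) (T w) u
                  - μ (T u) (𝔗 w) v - μ (𝔗 u) (T w) v)) ∧
       (∀ u v w : V,
          tr (𝔗 u) (𝔗 v) (𝔗 w)
            = 𝔗 (Dmap K br ρ μ (𝔗 u) (𝔗 v) w + μ (𝔗 v) (𝔗 w) u - μ (𝔗 u) (𝔗 w) v))) := by
  have hρa := hrep.1.1
  have hρs := hrep.1.2
  have hμa1 := hrep.2.1.1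
  have hμs1 := hrep.2.1.2.1
  have hμa2 := hrep.2.1.2.2.1
  have hμs2 := hrep.2.1.2.2.2
  have hba1 := hLY.1.1
  have hbs1 := hLY.1.2.1
  have hba2 := hLY.1.2.2.1
  have hbs2 := hLY.1.2.2.2
  have hta1 := hLY.2.1.1
  have hts1 := hLY.2.1.2.1
  have hta2 := hLY.2.1.2.2.1
  have hts2 := hLY.2.1.2.2.2.1
  have hta3 := hLY.2.1.2.2.2.2.1
  have hts3 := hLY.2.1.2.2.2.2.2
  have keyBr : ∀ (t : K) (u v : V),
      br ((T + t • 𝔗) u) ((T + t • 𝔗) v)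
        - (T + t • 𝔗) (ρ ((T + t • 𝔗) u) v - ρ ((T + t • 𝔗) v) u)
      = t • (br (𝔗 u) (T v) + br (T u) (𝔗 v)
            - (T (ρ (𝔗 u) v - ρ (𝔗 v) u) + 𝔗 (ρ (T u) v - ρ (T v) u)))
        + t ^ 2 • (br (𝔗 u) (𝔗 v) - 𝔗 (ρ (𝔗 u) v - ρ (𝔗 v) u)) := by
    intro t u v
    simp only [LinearMap.add_apply, LinearMap.smul_apply, hρa, hρs, hba1, hbs1, hba2, hbs2,
      map_add, map_sub, map_smul, hT.1]
    module
  have keyTr : ∀ (t : K) (u v w : V),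
      tr ((T + t • 𝔗) u) ((T + t • 𝔗) v) ((T + t • 𝔗) w)
        - (T + t • 𝔗) (Dmap K br ρ μ ((T + t • 𝔗) u) ((T + t • 𝔗) v) w
            + μ ((T + t • 𝔗) v) ((T + t • 𝔗) w) u - μ ((T + t • 𝔗) u) ((T + t • 𝔗) w) v)
      = t • (tr (T u) (T v) (𝔗 w) + tr (T u) (𝔗 v) (T w) + tr (𝔗 u) (T v) (T w)
            - (𝔗 (Dmap K br ρ μ (T u) (T v) w + μ (T v) (T w) u - μ (T u) (T w) v)
              + T (Dmap K br ρ μ (T u) (𝔗 v) w + Dmap K br ρ μ (𝔗 u) (T v) w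
                  + μ (T v) (𝔗 w) u + μ (𝔗 v) (T w) u
                  - μ (T u) (𝔗 w) v - μ (𝔗 u) (T w) v)))
        + t ^ 2 • (tr (𝔗 u) (𝔗 v) (T w) + tr (T u) (𝔗 v) (𝔗 w) + tr (𝔗 u) (T v) (𝔗 w)
            - (T (Dmap K br ρ μ (𝔗 u) (𝔗 v) w + μ (𝔗 v) (𝔗 w) u - μ (𝔗 u) (𝔗 w) v)
              + 𝔗 (Dmap K br ρ μ (T u) (𝔗 v) w + Dmap K br ρ μ (𝔗 u) (T v) w
                  + μ (T v) (𝔗 w) u + μ (𝔗 v) (T w) u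
                  - μ (T u) (𝔗 w) v - μ (𝔗 u) (T w) v)))
        + t ^ 3 • (tr (𝔗 u) (𝔗 v) (𝔗 w)
            - 𝔗 (Dmap K br ρ μ (𝔗 u) (𝔗 v) w + μ (𝔗 v) (𝔗 w) u - μ (𝔗 u) (𝔗 w) v)) := by
    intro t u v w
    simp only [Dmap, LinearMap.add_apply, LinearMap.smul_apply, LinearMap.sub_apply,
      Module.End.mul_apply, hρa, hρs, hμa1, hμs1, hμa2, hμs2, hba1, hbs1, hba2, hbs2,
      hta1, hts1, hta2, hts2, hta3, hts3, map_add, map_sub, map_smul, hT.2]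
    module
  constructor
  · intro h
    refine ⟨fun u v => ?_, fun u v => ?_, fun u v w => ?_, fun u v w => ?_, fun u v w => ?_⟩
    · exact sub_eq_zero.mp (quad_cancel K _ _ (fun t =>
        (keyBr t u v).symm.trans (sub_eq_zero.mpr ((h t).1 u v)))).1
    · exact sub_eq_zero.mp (quad_cancel K _ _ (fun t =>
        (keyBr t u v).symm.trans (sub_eq_zero.mpr ((h t).1 u v)))).2
    · exact sub_eq_zero.mp (cubic_cancel K _ _ _ (fun t =>
        (keyTr t u v w).symm.trans (sub_eq_zero.mpr ((h t).2 u v w)))).1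
    · exact sub_eq_zero.mp (cubic_cancel K _ _ _ (fun t =>
        (keyTr t u v w).symm.trans (sub_eq_zero.mpr ((h t).2 u v w)))).2.1
    · exact sub_eq_zero.mp (cubic_cancel K _ _ _ (fun t =>
        (keyTr t u v w).symm.trans (sub_eq_zero.mpr ((h t).2 u v w)))).2.2
  · rintro ⟨h1, h2, h3, h4, h5⟩ t
    constructor
    · intro u v
      have key := keyBr t u v
      rw [sub_eq_zero.mpr (h1 u v), sub_eq_zero.mpr (h2 u v), smul_zero, smul_zero,
        add_zero] at key
      exact sub_eq_zero.mp key
    · intro u v w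
      have key := keyTr t u v w
      rw [sub_eq_zero.mpr (h3 u v w), sub_eq_zero.mpr (h4 u v w), sub_eq_zero.mpr (h5 u v w),
        smul_zero, smul_zero, smul_zero, add_zero, add_zero] at key
      exact sub_eq_zero.mp key
end

section
/- On the 2-dimensional Lie-Yamaguti algebra 𝔤 with basis {e₁,e₂} and nonzero brackets [e₁,e₂]=e₁ and ⟦e₁,e₂,e₂⟧=e₁, the linear map R with matrix R(e₁)=0, R(e₂)=a·e₁+b·e₂ (for any scalars a,b) is a Rota-Baxter operator on 𝔤. -/
open scoped BigOperators

variable (K : Type*) [Field K]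

/-- The bracket of the 2-dimensional Lie-Yamaguti algebra with `[e₁,e₂] = e₁`. -/
def br18 (x y : Fin 2 → K) : Fin 2 → K := ![x 0 * y 1 - x 1 * y 0, 0]

/-- The triple bracket with `⟦e₁,e₂,e₂⟧ = e₁`. -/
def tr18 (x y z : Fin 2 → K) : Fin 2 → K := ![(x 0 * y 1 - x 1 * y 0) * z 1, 0]

/-- The operator with `R e₁ = 0`, `R e₂ = a e₁ + b e₂`. -/
def R18 (a b : K) (x : Fin 2 → K) : Fin 2 → K := ![a * x 1, b * x 1]

theorem stmt18 (a b : K) :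
    IsLY K (br18 K) (tr18 K) ∧
    (∀ x y : Fin 2 → K,
      br18 K (R18 K a b x) (R18 K a b y)
        = R18 K a b (br18 K (R18 K a b x) y - br18 K (R18 K a b y) x)) ∧
    (∀ x y z : Fin 2 → K,
      tr18 K (R18 K a b x) (R18 K a b y) (R18 K a b z)
        = R18 K a b (tr18 K (R18 K a b x) (R18 K a b y) z
            + tr18 K x (R18 K a b y) (R18 K a b z)
            + tr18 K (R18 K a b x) y (R18 K a b z))) := by

  have key : ∀ f g : Fin 2 → K, f 0 = g 0 → f 1 = g 1 → f = g := by
    intro f g h0 h1; funext i; fin_cases i <;> assumption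
  refine ⟨⟨⟨?_,?_,?_,?_⟩,⟨?_,?_,?_,?_,?_,?_⟩,?_,?_,?_,?_,?_,?_⟩,?_,?_⟩ <;>
    intros <;> apply key <;>
    simp [br18, tr18, R18, IsLY, IsBilin, IsTrilin, Matrix.cons_val_zero,
      Matrix.cons_val_one, Pi.add_apply, Pi.smul_apply, Pi.neg_apply, smul_eq_mul, Pi.zero_apply, -mul_eq_zero] <;>
    ring
end
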